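/- arXiv:2207.08285 — 2 statements merged into one kernel-verified Lean document; each statement's English description precedes it below -/
import Mathlib

section
/- Let $(X,\mu)$ be a $\sigma$-finite measure space and let $T : L^2(X) \to L^2(X)$ be a bounded linear operator such that $T(\varphi \cdot f) = \varphi \cdot T(f)$ for every $\varphi \in L^\infty(X)$ and every $f \in L^2(X)$. Then there exists $\theta \in L^\infty(X)$ such that $T(f) = \theta \cdot f$ for every $f \in L^2(X)$. -/
/-!
σ-finiteness provides a function `G ∈ Lᵖ` vanishing nowhere, and the symbol is `θ = T G / G`.
Commuting with bounded multipliers gives `T (φ G) = θ φ G` for every `φ ∈ L^∞`. Testing this on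
`φ = 𝟙_{C ≤ |θ|}` with `C > ‖T‖` shows that `|θ| ≤ ‖T‖` almost everywhere. A general `f` is, on
each set `{|f| ≤ n |G|}`, the bounded multiple `(f / G) G` of `G`; these sets exhaust `{G ≠ 0}`,
so `T f = θ f` almost everywhere.
-/

open MeasureTheory Filter
open scoped ENNReal

section

variable {X : Type*} [MeasurableSpace X]

theorem exists_pos_memLp (μ : Measure X) [SigmaFinite μ] (p : ℝ≥0∞) :
    ∃ g : X → ℝ, (∀ x, 0 < g x) ∧ MemLp g p μ := by
  by_cases hp : p = 0 ∨ p = ∞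
  · refine ⟨1, fun _ => one_pos, ?_⟩
    rcases hp with rfl | rfl
    · exact memLp_zero_iff_aestronglyMeasurable.2 aestronglyMeasurable_const
    · exact memLp_top_const 1
  push Not at hp
  obtain ⟨w, hw_pos, hw_meas, hw_int⟩ := exists_pos_lintegral_lt_of_sigmaFinite μ one_ne_zero
  have hp_real : 0 < p.toReal := ENNReal.toReal_pos hp.1 hp.2
  refine ⟨fun x => (w x : ℝ) ^ p.toReal⁻¹, fun x => Real.rpow_pos_of_pos (hw_pos x) _, ?_⟩
  have hw_memLp : MemLp (fun x => (w x : ℝ)) 1 μ := by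
    rw [memLp_one_iff_integrable]
    exact ⟨hw_meas.coe_nnreal_real.aestronglyMeasurable, by
      simpa [HasFiniteIntegral] using hw_int.trans ENNReal.one_lt_top⟩
  rw [← memLp_norm_rpow_iff (hw_meas.coe_nnreal_real.pow_const _).aestronglyMeasurable hp.1 hp.2,
    ENNReal.div_self hp.1 hp.2]
  refine hw_memLp.ae_eq (Eventually.of_forall fun x => ?_)
  dsimp only
  rw [Real.norm_of_nonneg (by positivity), ← Real.rpow_mul (by positivity),
    inv_mul_cancel₀ hp_real.ne', Real.rpow_one]

theorem MeasureTheory.Lp.exists_ae_ne_zero (𝕜 : Type*) [RCLike 𝕜] (μ : Measure X) [SigmaFinite μ]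
    (p : ℝ≥0∞) [Fact (1 ≤ p)] : ∃ G : Lp 𝕜 p μ, ∀ᵐ x ∂μ, G x ≠ 0 := by
  obtain ⟨g, hg_pos, hg⟩ := exists_pos_memLp μ p
  refine ⟨(hg.ofReal (K := 𝕜)).toLp _, ?_⟩
  filter_upwards [(hg.ofReal (K := 𝕜)).coeFn_toLp] with x hx
  simpa [hx] using (hg_pos x).ne'

variable {μ : Measure X}

theorem ContinuousLinearMap.le_opNorm_of_ae_mul_norm_le {𝕜 E F : Type*}
    [NontriviallyNormedField 𝕜] [NormedAddCommGroup E] [NormedSpace 𝕜 E]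
    [NormedAddCommGroup F] [NormedSpace 𝕜 F]
    {p : ℝ≥0∞} [Fact (1 ≤ p)] (T : Lp E p μ →L[𝕜] Lp F p μ) {v : Lp E p μ}
    (hv : v ≠ 0) {C : ℝ} (h : ∀ᵐ x ∂μ, C * ‖v x‖ ≤ ‖T v x‖) : C ≤ ‖T‖ := by
  rcases le_or_gt C 0 with hC | hC
  · exact hC.trans (norm_nonneg T)
  have hv_le : ‖v‖ ≤ C⁻¹ * ‖T v‖ := Lp.norm_le_mul_norm_of_ae_le_mul <| by
    filter_upwards [h] with x hx
    rwa [le_inv_mul_iff₀ hC]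
  have hv_pos : 0 < ‖v‖ := norm_pos_iff.2 hv
  refine le_of_mul_le_mul_right ?_ hv_pos
  calc C * ‖v‖ ≤ ‖T v‖ := (le_inv_mul_iff₀ hC).1 hv_le
    _ ≤ ‖T‖ * ‖v‖ := T.le_opNorm v

variable {𝕜 : Type*} [RCLike 𝕜] {p : ℝ≥0∞}

theorem MeasureTheory.Lp.measurable_div (f g : Lp 𝕜 p μ) : Measurable fun x => f x / g x :=
  (Lp.stronglyMeasurable f).measurable.div (Lp.stronglyMeasurable g).measurable

variable [Fact (1 ≤ p)]

def CommutesWithBoundedMul (T : Lp 𝕜 p μ →L[𝕜] Lp 𝕜 p μ) : Prop :=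
  ∀ φ : X → 𝕜, MemLp φ ∞ μ → ∀ f g : Lp 𝕜 p μ,
    (g : X → 𝕜) =ᵐ[μ] (fun x => φ x * f x) → (T g : X → 𝕜) =ᵐ[μ] fun x => φ x * T f x

namespace CommutesWithBoundedMul

variable {T : Lp 𝕜 p μ →L[𝕜] Lp 𝕜 p μ} {G : Lp 𝕜 p μ}

theorem apply_ae_eq_div_mul_of_ae_eq_mul (hT : CommutesWithBoundedMul T) (hG : ∀ᵐ x ∂μ, G x ≠ 0)
    {φ : X → 𝕜} (hφ : MemLp φ ∞ μ) {u : Lp 𝕜 p μ} (hu : (u : X → 𝕜) =ᵐ[μ] fun x => φ x * G x) :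
    (T u : X → 𝕜) =ᵐ[μ] fun x => T G x / G x * u x := by
  filter_upwards [hT φ hφ G u hu, hu, hG] with x hTux hux hGx
  rw [hTux, hux]
  field_simp

theorem ae_norm_div_le_opNorm (hT : CommutesWithBoundedMul T) (hG : ∀ᵐ x ∂μ, G x ≠ 0) :
    ∀ᵐ x ∂μ, ‖T G x / G x‖ ≤ ‖T‖ := by
  rw [ae_le_const_iff_forall_gt_measure_zero]
  intro C hC
  by_contra hA
  set A := {x | C ≤ ‖T G x / G x‖}
  have hA_meas : MeasurableSet A :=
    measurableSet_le measurable_const (Lp.measurable_div (T G) G).norm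
  set v : Lp 𝕜 p μ := ((Lp.memLp G).indicator hA_meas).toLp _
  have hv : (v : X → 𝕜) =ᵐ[μ] A.indicator G := MemLp.coeFn_toLp _
  have hTv := hT.apply_ae_eq_div_mul_of_ae_eq_mul hG
      ((memLp_top_const (1 : 𝕜)).indicator hA_meas) (u := v) <| by
    filter_upwards [hv] with x hx
    by_cases hxA : x ∈ A <;> simp [hx, hxA]
  have hv_ne : v ≠ 0 := by
    intro hv0
    rw [hv0] at hv
    have hA_null : ∀ᵐ x ∂μ, x ∉ A := by
      filter_upwards [hv, hG, Lp.coeFn_zero 𝕜 p μ] with x hvx hGx h0x hxA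
      rw [h0x, Set.indicator_of_mem hxA] at hvx
      exact hGx hvx.symm
    exact hA (by simpa [ae_iff] using hA_null)
  refine (T.le_opNorm_of_ae_mul_norm_le hv_ne ?_).not_gt hC
  filter_upwards [hv, hTv] with x hvx hTvx
  rw [hTvx, norm_mul, hvx]
  by_cases hxA : x ∈ A
  · simp only [Set.indicator_of_mem hxA]
    exact mul_le_mul_of_nonneg_right hxA (norm_nonneg _)
  · simp [hxA]

theorem ae_apply_eq_div_mul_of_norm_le (hT : CommutesWithBoundedMul T) (hG : ∀ᵐ x ∂μ, G x ≠ 0)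
    (f : Lp 𝕜 p μ) (n : ℕ) : ∀ᵐ x ∂μ, ‖f x‖ ≤ n * ‖G x‖ → T f x = T G x / G x * f x := by
  set S := {x | ‖f x‖ ≤ n * ‖G x‖}
  have hS_meas : MeasurableSet S := measurableSet_le (Lp.stronglyMeasurable f).measurable.norm
    (measurable_const.mul (Lp.stronglyMeasurable G).measurable.norm)
  set u : Lp 𝕜 p μ := ((Lp.memLp f).indicator hS_meas).toLp _
  have hu : (u : X → 𝕜) =ᵐ[μ] S.indicator f := MemLp.coeFn_toLp _
  have hTu_restrict := hT _ ((memLp_top_const (1 : 𝕜)).indicator hS_meas) f u <| by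
    filter_upwards [hu] with x hx
    by_cases hxS : x ∈ S <;> simp [hx, hxS]
  have hφ : MemLp (S.indicator fun x => f x / G x) ∞ μ := by
    refine memLp_top_of_bound ((Lp.measurable_div f G).indicator hS_meas).aestronglyMeasurable n
      (Eventually.of_forall fun x => ?_)
    by_cases hxS : x ∈ S
    · rw [Set.indicator_of_mem hxS, norm_div]
      exact div_le_of_le_mul₀ (norm_nonneg _) n.cast_nonneg hxS
    · simp [hxS]
  have hTu_div := hT.apply_ae_eq_div_mul_of_ae_eq_mul hG hφ (u := u) <| by
    filter_upwards [hu, hG] with x hx hGx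
    by_cases hxS : x ∈ S <;> simp [hx, hxS, hGx]
  filter_upwards [hTu_restrict, hTu_div, hu] with x h1 h2 hux hxS
  have hxS : x ∈ S := hxS
  rw [Set.indicator_of_mem hxS, one_mul, h2, hux, Set.indicator_of_mem hxS] at h1
  exact h1.symm

theorem apply_ae_eq_div_mul (hT : CommutesWithBoundedMul T) (hG : ∀ᵐ x ∂μ, G x ≠ 0)
    (f : Lp 𝕜 p μ) : (T f : X → 𝕜) =ᵐ[μ] fun x => T G x / G x * f x := by
  filter_upwards [ae_all_iff.2 (hT.ae_apply_eq_div_mul_of_norm_le hG f), hG] with x hx hGx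
  obtain ⟨n, hn⟩ := exists_nat_ge (‖f x‖ / ‖G x‖)
  exact hx n ((div_le_iff₀ (norm_pos_iff.2 hGx)).1 hn)

theorem exists_memLp_top_mul [SigmaFinite μ] (hT : CommutesWithBoundedMul T) :
    ∃ θ : X → 𝕜, MemLp θ ∞ μ ∧ ∀ f : Lp 𝕜 p μ, (T f : X → 𝕜) =ᵐ[μ] fun x => θ x * f x := by
  obtain ⟨G, hG⟩ := Lp.exists_ae_ne_zero 𝕜 μ p
  exact ⟨fun x => T G x / G x,
    memLp_top_of_bound (Lp.measurable_div (T G) G).aestronglyMeasurable ‖T‖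
      (hT.ae_norm_div_le_opNorm hG),
    hT.apply_ae_eq_div_mul hG⟩

end CommutesWithBoundedMul

end

theorem stmt_1 {X : Type*} [MeasurableSpace X] (μ : Measure X) [SigmaFinite μ]
    (T : Lp ℂ 2 μ →L[ℂ] Lp ℂ 2 μ)
    (hT : ∀ (φ : X → ℂ), MemLp φ ⊤ μ →
      ∀ f g : Lp ℂ 2 μ,
        (g : X → ℂ) =ᵐ[μ] (fun x => φ x * (f : X → ℂ) x) →
        (T g : X → ℂ) =ᵐ[μ] (fun x => φ x * (T f : X → ℂ) x)) :
    ∃ θ : X → ℂ, MemLp θ ⊤ μ ∧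
      ∀ f : Lp ℂ 2 μ, (T f : X → ℂ) =ᵐ[μ] fun x => θ x * (f : X → ℂ) x :=
  CommutesWithBoundedMul.exists_memLp_top_mul hT
end

section
/- Let $H$ be a separable Hilbert space and let $(U_s)_{s \in \mathbb{R}}$ be a one-parameter group of unitary operators on $H$ (i.e. $U_{s+s'} = U_s U_{s'}$ and $U_0 = \mathrm{id}$) such that for all $f, g \in H$ the map $s \mapsto \langle U_s f, g \rangle$ is measurable. Then $(U_s)$ is strongly continuous. -/
/-!
Fix `f` and put `u s = U s f`. Since `‖u s‖` is constant, polarization expresses `dist (u s) x`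
through `re ⟪u s, x⟫`, so preimages of balls under `u` are measurable. Given `ε > 0`, separability
covers `H` by countably many balls of radius `ε / 2`, and one of their preimages `E` has positive
Lebesgue measure. By Steinhaus' theorem `E - E` is a neighbourhood of `0`, and for `a, b ∈ E`
the group law and isometry give `‖u (a - b) - u 0‖ = ‖u a - u b‖ < ε`.
-/

open MeasureTheory Filter Topology Metric Set TopologicalSpace

theorem measurable_dist_of_measurable_inner {α 𝕜 E : Type*} [MeasurableSpace α] [RCLike 𝕜]
    [NormedAddCommGroup E] [InnerProductSpace 𝕜 E] {u : α → E}
    (hnorm : Measurable fun a => ‖u a‖) (hinner : ∀ x, Measurable fun a => inner 𝕜 (u a) x)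
    (x : E) : Measurable fun a => dist (u a) x := by
  have hpolar : ∀ a, dist (u a) x = √(‖u a‖ ^ 2 - 2 * RCLike.re (inner 𝕜 (u a) x) + ‖x‖ ^ 2) :=
    fun a => by rw [← norm_sub_sq (𝕜 := 𝕜), Real.sqrt_sq (norm_nonneg _), dist_eq_norm]
  simp_rw [hpolar]
  exact (((hnorm.pow_const 2).sub
    ((RCLike.measurable_re.comp (hinner x)).const_mul 2)).add_const _).sqrt

section RightInvariantDist

variable {G X : Type*} [AddGroup G] [TopologicalSpace G] [IsTopologicalAddGroup G]
  [PseudoMetricSpace X] {u : G → X}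

theorem continuousAt_zero_of_measurable_dist [MeasurableSpace G] [BorelSpace G]
    [LocallyCompactSpace G] (μ : Measure G) [μ.IsAddHaarMeasure] [μ.InnerRegular]
    [SeparableSpace X] (hmeas : ∀ x, Measurable fun g => dist (u g) x)
    (hinv : ∀ a b c, dist (u (a + c)) (u (b + c)) = dist (u a) (u b)) :
    ContinuousAt u 0 := by
  rw [ContinuousAt, Metric.tendsto_nhds]
  intro ε hε
  obtain ⟨D, hDcount, hDdense⟩ := exists_countable_dense X
  have hcover : ⋃ d ∈ D, u ⁻¹' ball d (ε / 2) = univ :=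
    eq_univ_of_forall fun g => by
      obtain ⟨d, hd, hgd⟩ := hDdense.exists_dist_lt (u g) (half_pos hε)
      exact mem_iUnion₂.2 ⟨d, hd, hgd⟩
  obtain ⟨d, -, hpos⟩ : ∃ d ∈ D, 0 < μ (u ⁻¹' ball d (ε / 2)) := by
    by_contra! hnull
    have hunion := (measure_biUnion_null_iff hDcount).2 fun d hd =>
      nonpos_iff_eq_zero.1 (hnull d hd)
    rw [hcover, Measure.measure_univ_eq_zero] at hunion
    exact NeZero.ne μ hunion
  have hE : MeasurableSet (u ⁻¹' ball d (ε / 2)) := measurableSet_lt (hmeas d) measurable_const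
  filter_upwards [Measure.sub_mem_nhds_zero_of_addHaar_pos μ _ hE hpos]
  rintro _ ⟨a, ha, b, hb, rfl⟩
  calc dist (u (a - b)) (u 0) = dist (u a) (u b) := by
        rw [← hinv (a - b) 0 b, sub_add_cancel, zero_add]
    _ ≤ dist (u a) d + dist (u b) d := dist_triangle_right _ _ _
    _ < ε / 2 + ε / 2 := add_lt_add ha hb
    _ = ε := add_halves ε

theorem continuous_of_continuousAt_zero_of_dist_add_right
    (hinv : ∀ a b c, dist (u (a + c)) (u (b + c)) = dist (u a) (u b)) (hu : ContinuousAt u 0) :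
    Continuous u := by
  refine continuous_iff_continuousAt.2 fun g => ?_
  have hdist : ∀ x, dist (u x) (u g) = dist (u (x - g)) (u 0) := fun x => by
    rw [← hinv (x - g) 0 g, sub_add_cancel, zero_add]
  have hshift : Tendsto (fun x => x - g) (𝓝 g) (𝓝 0) := by
    simpa using (tendsto_id (x := 𝓝 g)).sub_const g
  rw [ContinuousAt, tendsto_iff_dist_tendsto_zero] at hu ⊢
  exact (hu.comp hshift).congr fun x => (hdist x).symm

end RightInvariantDist

theorem stmt_4_general {H : Type*} [NormedAddCommGroup H] [InnerProductSpace ℂ H]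
    [TopologicalSpace.SeparableSpace H]
    (U : ℝ → H →L[ℂ] H)
    (hiso : ∀ (s : ℝ) (f : H), ‖U s f‖ = ‖f‖)
    (hgrp : ∀ s s' : ℝ, U (s + s') = (U s).comp (U s'))
    (hmeas : ∀ f g : H, Measurable fun s : ℝ => (inner ℂ (U s f) g : ℂ)) :
    ∀ f : H, Continuous fun s : ℝ => U s f := by
  intro f
  have hinv : ∀ a b c : ℝ, dist (U (a + c) f) (U (b + c) f) = dist (U a f) (U b f) :=
    fun a b c => by
      rw [add_comm a, add_comm b, hgrp, hgrp, ContinuousLinearMap.comp_apply,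
        ContinuousLinearMap.comp_apply, dist_eq_norm, ← map_sub, hiso, dist_eq_norm]
  have hnorm : Measurable fun s => ‖U s f‖ := by simpa only [hiso] using measurable_const
  exact continuous_of_continuousAt_zero_of_dist_add_right hinv <|
    continuousAt_zero_of_measurable_dist (u := fun s => U s f) volume
      (measurable_dist_of_measurable_inner hnorm (hmeas f)) hinv

theorem stmt_4 {H : Type*} [NormedAddCommGroup H] [InnerProductSpace ℂ H] [CompleteSpace H]
    [TopologicalSpace.SeparableSpace H]
    (U : ℝ → H →L[ℂ] H)
    (hiso : ∀ (s : ℝ) (f : H), ‖U s f‖ = ‖f‖)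
    (hgrp : ∀ s s' : ℝ, U (s + s') = (U s).comp (U s'))
    (h0 : U 0 = ContinuousLinearMap.id ℂ H)
    (hmeas : ∀ f g : H, Measurable fun s : ℝ => (inner ℂ (U s f) g : ℂ)) :
    ∀ f : H, Continuous fun s : ℝ => U s f :=
  stmt_4_general U hiso hgrp hmeas
end
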